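/- arXiv:1810.04229 — 3 statements merged into one kernel-verified Lean document; each statement's English description precedes it below -/
import Mathlib

section
/- For every k ≥ 1, the survival set S_k = Q_{M_k}^{-1}(D̄(0,2)) has exactly 2^(M_k) connected components. -/
/-!
Between two consecutive marked times the composition is `z ↦ z ^ N + c` with `N = 2 ^ (m + 1)`.
Since `2 < ‖c‖`, the closed disc `D̄(0, 2)` misses a ray from `c`, so `w ↦ w ^ N + c` has `N`
continuous inverse branches on it, with pairwise disjoint images, all inside `D̄(0, 2)` because
`‖c‖ + 2 < 2 ^ N`. Pulling back a splitting of a subset of `D̄(0, 2)` into disjoint compact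
connected pieces therefore multiplies the number of pieces by `N`. Starting from `D̄(0, 2)` at
time `M k` and going down to time `0` gives `2 ^ M k` pieces of `S k`, and these pieces are
exactly its connected components.
-/

open Complex Metric Set

section Decomposition

variable {X Y : Type*} [TopologicalSpace X] [TopologicalSpace Y]

structure IsCompactConnectedDecomposition (T : Set X) (F : Finset (Set X)) : Prop where
  sUnion_eq : ⋃₀ (F : Set (Set X)) = T
  isCompact : ∀ C ∈ F, IsCompact C
  isConnected : ∀ C ∈ F, IsConnected C
  pairwiseDisjoint : (F : Set (Set X)).PairwiseDisjoint id

namespace IsCompactConnectedDecomposition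

variable {T : Set X} {F : Finset (Set X)}

theorem singleton (hT : IsCompact T) (hT' : IsConnected T) :
    IsCompactConnectedDecomposition T {T} where
  sUnion_eq := by simp
  isCompact := by simpa using hT
  isConnected := by simpa using hT'
  pairwiseDisjoint := by simp

theorem subset (hF : IsCompactConnectedDecomposition T F) {C : Set X} (hC : C ∈ F) : C ⊆ T :=
  hF.sUnion_eq ▸ subset_sUnion_of_mem hC

theorem connectedComponentIn_eq [T2Space X] (hF : IsCompactConnectedDecomposition T F)
    {C : Set X} (hC : C ∈ F) {z : X} (hz : z ∈ C) : connectedComponentIn T z = C := by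
  classical
  refine Subset.antisymm ?_ ((hF.isConnected C hC).isPreconnected.subset_connectedComponentIn
    hz (hF.subset hC))
  set R := ⋃ D ∈ F.erase C, D
  have hR : IsClosed R := (F.erase C).finite_toSet.isClosed_biUnion fun D hD =>
    (hF.isCompact D (Finset.mem_of_mem_erase hD)).isClosed
  have hCR : Disjoint C R := disjoint_iUnion₂_right.mpr fun D hD =>
    hF.pairwiseDisjoint hC (Finset.mem_of_mem_erase hD) (Finset.ne_of_mem_erase hD).symm
  have hTCR : T ⊆ C ∪ R := by
    rw [← hF.sUnion_eq]
    rintro x ⟨D, hD, hx⟩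
    by_cases hDC : D = C
    · exact .inl (hDC ▸ hx)
    · exact .inr (mem_biUnion (Finset.mem_erase.mpr ⟨hDC, hD⟩) hx)
  rcases isPreconnected_iff_subset_of_disjoint_closed.mp isPreconnected_connectedComponentIn
    C R (hF.isCompact C hC).isClosed hR ((connectedComponentIn_subset T z).trans hTCR)
    (by rw [hCR.inter_eq, inter_empty]) with h | h
  · exact h
  · exact absurd (h (mem_connectedComponentIn (hF.subset hC hz)))
      (hCR.notMem_of_mem_left hz)

theorem setOf_connectedComponentIn_eq [T2Space X] (hF : IsCompactConnectedDecomposition T F) :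
    {C : Set X | ∃ z ∈ T, C = connectedComponentIn T z} = F := by
  ext C
  constructor
  · rintro ⟨z, hz, rfl⟩
    obtain ⟨D, hD, hzD⟩ := mem_sUnion.mp (hF.sUnion_eq ▸ hz)
    rwa [hF.connectedComponentIn_eq hD hzD]
  · intro hC
    obtain ⟨z, hz⟩ := (hF.isConnected C hC).nonempty
    exact ⟨z, hF.subset hC hz, (hF.connectedComponentIn_eq hC hz).symm⟩

theorem exists_image_sections {ι : Type*} [Fintype ι]
    (hF : IsCompactConnectedDecomposition T F)
    {σ : ι → X → Y} (hσ : ∀ i, ContinuousOn (σ i) T)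
    (hinj : InjOn (Function.uncurry σ) (univ ×ˢ T)) :
    ∃ G : Finset (Set Y), G.card = F.card * Fintype.card ι ∧
      IsCompactConnectedDecomposition (⋃ i, σ i '' T) G := by
  classical
  have hmeet : ∀ p ∈ F ×ˢ (Finset.univ : Finset ι), ∀ q ∈ F ×ˢ (Finset.univ : Finset ι),
      ¬ Disjoint (σ p.2 '' p.1) (σ q.2 '' q.1) → p = q := by
    rintro ⟨C, i⟩ hp ⟨D, j⟩ hq hCD
    simp only [Finset.mem_product, Finset.mem_univ, and_true] at hp hq
    obtain ⟨-, ⟨x, hx, rfl⟩, ⟨y, hy, hxy⟩⟩ := not_disjoint_iff.mp hCD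
    obtain ⟨rfl, rfl⟩ := Prod.ext_iff.mp (hinj (mk_mem_prod (mem_univ j) (hF.subset hq hy))
      (mk_mem_prod (mem_univ i) (hF.subset hp hx)) hxy)
    rw [hF.pairwiseDisjoint.elim hp hq (not_disjoint_iff.mpr ⟨y, hx, hy⟩)]
  refine ⟨(F ×ˢ Finset.univ).image fun p => σ p.2 '' p.1, ?_, ⟨?_, ?_, ?_, ?_⟩⟩
  · rw [Finset.card_image_of_injOn, Finset.card_product, Finset.card_univ]
    intro p hp q hq hpq
    obtain ⟨x, hx⟩ := (hF.isConnected p.1 (Finset.mem_product.mp hp).1).nonempty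
    exact hmeet p hp q hq (not_disjoint_iff.mpr ⟨_, mem_image_of_mem _ hx,
      (congrArg (σ p.2 x ∈ ·) hpq).mp (mem_image_of_mem _ hx)⟩)
  · rw [← hF.sUnion_eq]
    ext y
    simp only [Finset.coe_image, sUnion_image, mem_iUnion, Finset.mem_coe, Finset.mem_product,
      Finset.mem_univ, and_true, mem_image, mem_sUnion, Prod.exists]
    aesop
  · simp only [Finset.mem_image, Finset.mem_product, Finset.mem_univ, and_true]
    rintro _ ⟨⟨C, i⟩, hC, rfl⟩
    exact (hF.isCompact C hC).image_of_continuousOn ((hσ i).mono (hF.subset hC))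
  · simp only [Finset.mem_image, Finset.mem_product, Finset.mem_univ, and_true]
    rintro _ ⟨⟨C, i⟩, hC, rfl⟩
    exact (hF.isConnected C hC).image _ ((hσ i).mono (hF.subset hC))
  · rintro _ hC _ hD hne
    obtain ⟨p, hp, rfl⟩ := Finset.mem_image.mp hC
    obtain ⟨q, hq, rfl⟩ := Finset.mem_image.mp hD
    by_contra h
    exact hne (by rw [hmeet p hp q hq h])

end IsCompactConnectedDecomposition

end Decomposition

section RootBranches

variable {a : ℂ} {N : ℕ}

noncomputable def nthRootBranch (a : ℂ) (N i : ℕ) (v : ℂ) : ℂ :=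
  exp (2 * Real.pi * I / N) ^ i * (a ^ (N⁻¹ : ℂ) * (v / a) ^ (N⁻¹ : ℂ))

theorem nthRootBranch_eq_mul (a : ℂ) (N i : ℕ) (v : ℂ) :
    nthRootBranch a N i v = exp (2 * Real.pi * I / N) ^ i * nthRootBranch a N 0 v := by
  rw [nthRootBranch, nthRootBranch, pow_zero, one_mul]

theorem nthRootBranch_pow (ha : a ≠ 0) (hN : N ≠ 0) (i : ℕ) (v : ℂ) :
    nthRootBranch a N i v ^ N = v := by
  rw [nthRootBranch, mul_pow, mul_pow, ← pow_mul, mul_comm i, pow_mul,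
    (isPrimitiveRoot_exp N hN).pow_eq_one, one_pow, one_mul, cpow_nat_inv_pow _ hN,
    cpow_nat_inv_pow _ hN, mul_div_cancel₀ _ ha]

theorem nthRootBranch_ne_zero (ha : a ≠ 0) (hN : N ≠ 0) (i : ℕ) {v : ℂ} (hv : v ≠ 0) :
    nthRootBranch a N i v ≠ 0 := fun h =>
  hv (by rw [← nthRootBranch_pow ha hN i v, h, zero_pow hN])

theorem continuousOn_nthRootBranch (i : ℕ) :
    ContinuousOn (nthRootBranch a N i) {v | v / a ∈ slitPlane} := fun _ hv =>
  (continuousAt_const.mul (continuousAt_const.mul ((continuousAt_cpow_const hv).comp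
    (f := (· / a)) (by fun_prop)))).continuousWithinAt

theorem nthRootBranch_inj (ha : a ≠ 0) (hN : N ≠ 0) {i j : ℕ} (hi : i < N) (hj : j < N)
    {v v' : ℂ} (hv : v ≠ 0) (h : nthRootBranch a N i v = nthRootBranch a N j v') :
    i = j ∧ v = v' := by
  obtain rfl : v = v' := by
    simpa only [nthRootBranch_pow ha hN] using congrArg (· ^ N) h
  rw [nthRootBranch_eq_mul, nthRootBranch_eq_mul a N j] at h
  exact ⟨(isPrimitiveRoot_exp N hN).pow_inj hi hj
    (mul_right_cancel₀ (nthRootBranch_ne_zero ha hN 0 hv) h), rfl⟩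

theorem exists_nthRootBranch_eq (ha : a ≠ 0) (hN : N ≠ 0) {v w : ℂ} (hv : v ≠ 0)
    (hw : w ^ N = v) : ∃ i < N, nthRootBranch a N i v = w := by
  have : NeZero N := ⟨hN⟩
  have hρ := nthRootBranch_ne_zero ha hN 0 hv
  obtain ⟨i, hi, hζ⟩ := (isPrimitiveRoot_exp N hN).eq_pow_of_pow_eq_one
    (ξ := w / nthRootBranch a N 0 v) (by rw [div_pow, hw, nthRootBranch_pow ha hN, div_self hv])
  exact ⟨i, hi, by rw [nthRootBranch_eq_mul, hζ, div_mul_cancel₀ _ hρ]⟩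

end RootBranches

theorem mem_closedBall_of_pow_add_mem_closedBall {c w : ℂ} {N : ℕ} (hNc : ‖c‖ + 2 < 2 ^ N)
    (hw : w ^ N + c ∈ closedBall (0 : ℂ) 2) : w ∈ closedBall (0 : ℂ) 2 := by
  rw [mem_closedBall_zero_iff] at hw ⊢
  by_contra! h
  have h2N : (2 : ℝ) ^ N ≤ ‖w‖ ^ N := pow_le_pow_left₀ zero_le_two h.le N
  have := norm_sub_le (w ^ N + c) c
  rw [add_sub_cancel_right, norm_pow] at this
  linarith

theorem IsCompactConnectedDecomposition.exists_preimage_pow_add {c : ℂ} {N : ℕ}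
    (hc : 2 < ‖c‖) (hNc : ‖c‖ + 2 < 2 ^ N) {T : Set ℂ} {F : Finset (Set ℂ)}
    (hT : T ⊆ closedBall 0 2)
    (hF : IsCompactConnectedDecomposition T F) :
    ∃ G : Finset (Set ℂ), G.card = F.card * N ∧
      IsCompactConnectedDecomposition {w | w ^ N + c ∈ T} G := by
  have hN : N ≠ 0 := by
    rintro rfl
    linarith [norm_nonneg c, pow_zero (2 : ℝ)]
  have hc0 : c ≠ 0 := norm_pos_iff.mp (by linarith)
  -- `(z - c) / -c = 1 - z / c` with `‖z / c‖ < 1`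
  have hball : ∀ z ∈ T, z - c ≠ 0 ∧ (z - c) / -c ∈ slitPlane := by
    intro z hz
    have hzc : ‖-(z / c)‖ < 1 := by
      rw [norm_neg, norm_div, div_lt_one (by linarith)]
      linarith [mem_closedBall_zero_iff.mp (hT hz)]
    refine ⟨fun h => ?_, ?_⟩
    · rw [sub_eq_zero.mp h, div_self hc0, norm_neg, norm_one] at hzc
      exact lt_irrefl _ hzc
    · convert mem_slitPlane_of_norm_lt_one hzc using 1
      field_simp
      ring
  set σ : Fin N → ℂ → ℂ := fun i z => nthRootBranch (-c) N i (z - c)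
  have hpre : {w | w ^ N + c ∈ T} = ⋃ i, σ i '' T := by
    ext w
    simp only [mem_iUnion, mem_image, σ]
    constructor
    · intro hw
      obtain ⟨i, hi, hiw⟩ := exists_nthRootBranch_eq (neg_ne_zero.mpr hc0) hN (hball _ hw).1
        (add_sub_cancel_right _ c).symm
      exact ⟨⟨i, hi⟩, _, hw, hiw⟩
    · rintro ⟨i, z, hz, rfl⟩
      rwa [mem_ofPred, nthRootBranch_pow (neg_ne_zero.mpr hc0) hN, sub_add_cancel]
  have hσ : ∀ i, ContinuousOn (σ i) T := fun i =>
    (continuousOn_nthRootBranch (i : ℕ)).comp (continuousOn_id.sub continuousOn_const)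
      fun z hz => (hball z hz).2
  have hinj : InjOn (Function.uncurry σ) (univ ×ˢ T) := by
    rintro ⟨i, z⟩ ⟨-, hz⟩ ⟨j, z'⟩ - h
    obtain ⟨hij, hzz⟩ :=
      nthRootBranch_inj (neg_ne_zero.mpr hc0) hN i.2 j.2 (hball z hz).1 h
    rw [Fin.ext hij, sub_left_inj.mp hzz]
  rw [hpre]
  simpa using hF.exists_image_sections hσ hinj

theorem exists_decomposition_of_preimage_chain {T : ℕ → Set ℂ} {N : ℕ → ℕ} {c : ℕ → ℂ}
    {k : ℕ} (hTk : T k = closedBall 0 2) (hT : ∀ j < k, T j = {w | w ^ N j + c j ∈ T (j + 1)})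
    (hc : ∀ j < k, 2 < ‖c j‖) (hNc : ∀ j < k, ‖c j‖ + 2 < 2 ^ N j) {j : ℕ} (hj : j ≤ k) :
    T j ⊆ closedBall 0 2 ∧ ∃ F : Finset (Set ℂ), F.card = ∏ i ∈ Finset.Ico j k, N i ∧
      IsCompactConnectedDecomposition (T j) F := by
  induction hj using Nat.decreasingInduction with
  | self =>
    rw [hTk]
    exact ⟨subset_rfl, _, by simp, .singleton (isCompact_closedBall 0 2)
      ((convex_closedBall 0 2).isConnected (nonempty_closedBall.mpr zero_le_two))⟩
  | of_succ j hjk ih =>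
    obtain ⟨hsub, F, hcard, hF⟩ := ih
    obtain ⟨G, hG, hGF⟩ := hF.exists_preimage_pow_add (hc j hjk) (hNc j hjk) hsub
    rw [hT j hjk]
    refine ⟨fun w hw => mem_closedBall_of_pow_add_mem_closedBall (hNc j hjk) (hsub hw),
      G, ?_, hGF⟩
    rw [hG, hcard, Finset.prod_eq_prod_Ico_succ_bot hjk, mul_comm]

theorem add_two_lt_sq_of_sqrt_add_one_lt {x B : ℝ} (hx : 1 / 4 ≤ x) (h : √x + 1 < B) :
    x + 2 < B ^ 2 := by
  have hs : 1 / 2 ≤ √x := Real.le_sqrt_of_sq_le (by linarith)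
  have hsq := Real.sq_sqrt (by linarith : 0 ≤ x)
  nlinarith

section Composition

variable {P : ℕ → ℂ → ℂ} {Q : ℕ → ℕ → ℂ → ℂ}

theorem comp_eq_comp_of_le (hQ0 : ∀ n z, Q n n z = z)
    (hQs : ∀ a n z, a ≤ n → Q a (n + 1) z = P (n + 1) (Q a n z))
    {a b n : ℕ} (hab : a ≤ b) (hbn : b ≤ n) (z : ℂ) : Q a n z = Q b n (Q a b z) := by
  induction n, hbn using Nat.le_induction with
  | base => rw [hQ0]
  | succ n hbn ih => rw [hQs a n z (hab.trans hbn), hQs b n _ hbn, ih]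

theorem comp_eq_pow_add (hQ0 : ∀ n z, Q n n z = z)
    (hQs : ∀ a n z, a ≤ n → Q a (n + 1) z = P (n + 1) (Q a n z)) {a t : ℕ} {c : ℂ}
    (hsq : ∀ i, a < i → i ≤ a + t → ∀ z, P i z = z ^ 2)
    (hc : ∀ z, P (a + t + 1) z = z ^ 2 + c)
    (z : ℂ) : Q a (a + t + 1) z = z ^ 2 ^ (t + 1) + c := by
  have hpow : ∀ s ≤ t, Q a (a + s) z = z ^ 2 ^ s := by
    intro s hs
    induction s with
    | zero => simp [hQ0]
    | succ s ih =>
      rw [← add_assoc, hQs a _ z (by omega), hsq _ (by omega) (by omega), ih (by omega),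
        ← pow_mul, pow_succ]
  rw [hQs a _ z (by omega), hc, hpow t le_rfl, ← pow_mul, pow_succ]

theorem comp_eq_pow_add_of_strictMono {c : ℕ → ℂ} {msq M : ℕ → ℕ}
    (hQ0 : ∀ n z, Q n n z = z)
    (hQs : ∀ a n z, a ≤ n → Q a (n + 1) z = P (n + 1) (Q a n z)) (hM : StrictMono M)
    (hMs : ∀ k, M (k + 1) = M k + (msq (k + 1) + 1))
    (hP1 : ∀ k, 1 ≤ k → ∀ z, P (M k) z = z ^ 2 + c k)
    (hP2 : ∀ n, (∀ k, 1 ≤ k → M k ≠ n) → ∀ z, P n z = z ^ 2) (j : ℕ) (z : ℂ) :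
    Q (M j) (M (j + 1)) z = z ^ 2 ^ (msq (j + 1) + 1) + c (j + 1) := by
  rw [hMs, ← add_assoc]
  refine comp_eq_pow_add hQ0 hQs (fun i hi hi' => hP2 i fun l _ hl => ?_) ?_ z
  · have := hMs j
    have : j < l ∧ l < j + 1 := ⟨hM.lt_iff_lt.mp (by omega), hM.lt_iff_lt.mp (by omega)⟩
    omega
  · rw [add_assoc, ← hMs]
    exact hP1 (j + 1) (by omega)

end Composition

theorem stmt_9_general
    (c : ℕ → ℂ) (msq : ℕ → ℕ)
    (hc : ∀ k, 1 ≤ k → 4 < ‖c k‖)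
    (hinv : ∀ k, 1 ≤ k → Real.sqrt (‖c k‖) + 1 < (2 : ℝ) ^ 2 ^ msq k)
    (M : ℕ → ℕ) (hM0 : M 0 = 0)
    (hMs : ∀ k, M (k + 1) = M k + (msq (k + 1) + 1))
    (P : ℕ → ℂ → ℂ)
    (hP1 : ∀ k, 1 ≤ k → ∀ z, P (M k) z = z ^ 2 + c k)
    (hP2 : ∀ n, (∀ k, 1 ≤ k → M k ≠ n) → ∀ z, P n z = z ^ 2)
    (Q : ℕ → ℕ → ℂ → ℂ)
    (hQ0 : ∀ n z, Q n n z = z)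
    (hQs : ∀ a n z, a ≤ n → Q a (n + 1) z = P (n + 1) (Q a n z))
    (S : ℕ → Set ℂ)
    (hS : ∀ k, S k = {z : ℂ | ‖Q 0 (M k) z‖ ≤ 2}) :
    ∀ k, 1 ≤ k →
      {C : Set ℂ | ∃ z ∈ S k, C = connectedComponentIn (S k) z}.ncard = 2 ^ M k := by
  rintro k -
  have hM : StrictMono M := strictMono_nat_of_lt_succ fun n => by rw [hMs n]; omega
  have hMsum := (Finset.sum_range_induction _ M hM0 k fun n _ => hMs n).symm
  have hseg := comp_eq_pow_add_of_strictMono hQ0 hQs hM hMs hP1 hP2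
  obtain ⟨-, F, hcard, hF⟩ := exists_decomposition_of_preimage_chain
    (T := fun j => {w | Q (M j) (M k) w ∈ closedBall 0 2})
    (N := fun j => 2 ^ (msq (j + 1) + 1))
    (c := fun j => c (j + 1)) (by simp only [hQ0, ofPred_mem_eq])
    (fun j hj => by
      ext w
      rw [mem_ofPred, mem_ofPred, mem_ofPred,
        comp_eq_comp_of_le hQ0 hQs (hM.monotone j.le_succ) (hM.monotone hj) w, hseg])
    (fun j _ => by linarith [hc (j + 1) (by omega)])
    (fun j _ => by
      rw [pow_succ, pow_mul]
      exact add_two_lt_sq_of_sqrt_add_one_lt (by linarith [hc (j + 1) (by omega)])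
        (hinv (j + 1) (by omega)))
    (Nat.zero_le k)
  have hSk : S k = {w | Q (M 0) (M k) w ∈ closedBall 0 2} := by
    simp only [hS, hM0, mem_closedBall_zero_iff]
  rw [hSk, hF.setOf_connectedComponentIn_eq, ncard_coe_finset, hcard, Finset.prod_pow_eq_pow_sum,
    hMsum, Finset.range_eq_Ico]

/-- For every k ≥ 1, the survival set S_k has exactly 2^(M_k)
connected components. -/
theorem stmt_9
    (c : ℕ → ℂ) (msq : ℕ → ℕ)
    (hc : ∀ k, 1 ≤ k → 4 < ‖c k‖)
    (hmsq : ∀ k, 1 ≤ k → 1 ≤ msq k)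
    (hinv : ∀ k, 1 ≤ k → Real.sqrt (‖c k‖) + 1 < (2 : ℝ) ^ 2 ^ msq k)
    (M : ℕ → ℕ) (hM0 : M 0 = 0)
    (hMs : ∀ k, M (k + 1) = M k + (msq (k + 1) + 1))
    (P : ℕ → ℂ → ℂ)
    (hP1 : ∀ k, 1 ≤ k → ∀ z, P (M k) z = z ^ 2 + c k)
    (hP2 : ∀ n, (∀ k, 1 ≤ k → M k ≠ n) → ∀ z, P n z = z ^ 2)
    (Q : ℕ → ℕ → ℂ → ℂ)
    (hQ0 : ∀ n z, Q n n z = z)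
    (hQs : ∀ a n z, a ≤ n → Q a (n + 1) z = P (n + 1) (Q a n z))
    (S : ℕ → Set ℂ)
    (hS : ∀ k, S k = {z : ℂ | ‖Q 0 (M k) z‖ ≤ 2}) :
    ∀ k, 1 ≤ k →
      {C : Set ℂ | ∃ z ∈ S k, C = connectedComponentIn (S k) z}.ncard = 2 ^ M k :=
  stmt_9_general c msq hc hinv M hM0 hMs P hP1 hP2 Q hQ0 hQs S hS
end

section
/- If z ∈ ℂ satisfies |Q_{M_k}(z)| > 2 for some k ≥ 1 (i.e., z ∉ S_k), then there exists an open neighbourhood U of z such that inf_{w ∈ U} |Q_n(w)| → ∞ as n → ∞; in particular Q_n(z) → ∞ and the orbit escapes to infinity locally uniformly near z. -/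
/-!
Fix `w` with `‖Q_{M_k}(w)‖ > r > 2`. Between two marked times the orbit is only squared, so its
norm never drops below the value at the last marked time; across the marked time `M_{k+1}` it is
raised to the power `2^{m_{k+1}+1}` and then shifted by `c_{k+1}`, and the choice of `m_{k+1}`
makes the power swamp the shift: `‖Q_{M_{k+1}}(w)‖ ≥ ‖Q_{M_k}(w)‖²`. Hence
`‖Q_n(w)‖ ≥ r^{2^j}` for `n ≥ M_{k+j}`, uniformly on the open set `{w | ‖Q_{M_k}(w)‖ > r}`.
-/

open Filter Set

theorem sq_add_sq_le_pow_two_pow_succ {s u : ℝ} {m : ℕ} (hs : 2 ≤ s) (hu : 2 ≤ u)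
    (hm : u + 1 ≤ 2 ^ 2 ^ m) : s ^ 2 + u ^ 2 ≤ s ^ 2 ^ (m + 1) := by
  have half_le : s / 2 ≤ (s / 2) ^ 2 ^ m := le_self_pow₀ (by linarith) (by positivity)
  have hlow : s / 2 * (u + 1) ≤ s ^ 2 ^ m :=
    calc s / 2 * (u + 1) ≤ (s / 2) ^ 2 ^ m * 2 ^ 2 ^ m :=
          mul_le_mul half_le hm (by linarith) (by positivity)
      _ = s ^ 2 ^ m := by rw [← mul_pow, div_mul_cancel₀ s two_ne_zero]
  have hsq : (s / 2 * (u + 1)) ^ 2 ≤ (s ^ 2 ^ m) ^ 2 := pow_le_pow_left₀ (by positivity) hlow 2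
  rw [pow_succ 2 m, pow_mul]
  nlinarith [mul_nonneg (by nlinarith : (0 : ℝ) ≤ s ^ 2 - 4)
    (by nlinarith : (0 : ℝ) ≤ u ^ 2 + 2 * u - 3)]

theorem sq_norm_le_norm_pow_two_pow_add {𝕜 : Type*} [NormedDivisionRing 𝕜] {x a : 𝕜} {m : ℕ}
    (hx : 2 ≤ ‖x‖) (ha : 4 ≤ ‖a‖) (hm : √‖a‖ + 1 ≤ 2 ^ 2 ^ m) :
    ‖x‖ ^ 2 ≤ ‖x ^ 2 ^ (m + 1) + a‖ := by
  have hu : 2 ≤ √‖a‖ := Real.le_sqrt_of_sq_le (by linarith)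
  have key := sq_add_sq_le_pow_two_pow_succ hx hu hm
  rw [Real.sq_sqrt (norm_nonneg a)] at key
  have htri := norm_sub_le (x ^ 2 ^ (m + 1) + a) a
  rw [add_sub_cancel_right, norm_pow] at htri
  linarith

theorem StrictMono.exists_le_lt_succ {M : ℕ → ℕ} (hM : StrictMono M) {k n : ℕ} (h : M k ≤ n) :
    ∃ t, k ≤ t ∧ M t ≤ n ∧ n < M (t + 1) := by
  induction n, h using Nat.le_induction with
  | base => exact ⟨k, le_rfl, le_rfl, hM (Nat.lt_succ_self k)⟩
  | succ n _ ih =>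
    obtain ⟨t, hkt, htn, hnt⟩ := ih
    rcases (Nat.succ_le_of_lt hnt).lt_or_eq with hlt | heq
    · exact ⟨t, hkt, htn.trans n.le_succ, hlt⟩
    · exact ⟨t + 1, hkt.trans t.le_succ, heq.ge,
      by have := hM (Nat.lt_add_one (t + 1)); omega⟩

theorem tendsto_sInf_image_atTop {ι α : Type*} {l : Filter ι} {f : ι → α → ℝ} {U : Set α}
    (hU : U.Nonempty) (h : ∀ B, ∀ᶠ i in l, ∀ w ∈ U, B ≤ f i w) :
    Tendsto (fun i => sInf (f i '' U)) l atTop :=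
  tendsto_atTop.2 fun B => (h B).mono fun _ hi => le_csInf (hU.image _) (forall_mem_image.2 hi)

section MarkedTimes

variable {a : ℕ → ℝ} {M : ℕ → ℕ}

theorem le_apply_marked_of_le (hjump : ∀ k, 2 ≤ a (M k) → a (M k) ^ 2 ≤ a (M (k + 1)))
    {k t : ℕ} (h2 : 2 ≤ a (M k)) (hkt : k ≤ t) : a (M k) ≤ a (M t) := by
  induction t, hkt using Nat.le_induction with
  | base => exact le_rfl
  | succ t _ ih =>
    have := hjump t (h2.trans ih)
    nlinarith

theorem le_apply_of_marked_le (hM : StrictMono M)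
    (hstretch : ∀ k n, M k ≤ n → n < M (k + 1) → 2 ≤ a (M k) → a (M k) ≤ a n)
    (hjump : ∀ k, 2 ≤ a (M k) → a (M k) ^ 2 ≤ a (M (k + 1)))
    {k n : ℕ} (h2 : 2 ≤ a (M k)) (hn : M k ≤ n) : a (M k) ≤ a n := by
  obtain ⟨t, hkt, htn, hnt⟩ := hM.exists_le_lt_succ hn
  have hkt := le_apply_marked_of_le hjump h2 hkt
  exact hkt.trans (hstretch t n htn hnt (h2.trans hkt))

theorem pow_two_pow_le_of_marked_le (hM : StrictMono M)
    (hstretch : ∀ k n, M k ≤ n → n < M (k + 1) → 2 ≤ a (M k) → a (M k) ≤ a n)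
    (hjump : ∀ k, 2 ≤ a (M k) → a (M k) ^ 2 ≤ a (M (k + 1)))
    {s : ℝ} {k j n : ℕ} (hs : 2 ≤ s) (hsk : s ≤ a (M k)) (hn : M (k + j) ≤ n) :
    s ^ 2 ^ j ≤ a n := by
  induction j generalizing k s with
  | zero => simpa using hsk.trans (le_apply_of_marked_le hM hstretch hjump (hs.trans hsk) hn)
  | succ j ih =>
    have hsq : s ^ 2 ≤ a (M (k + 1)) :=
      (pow_le_pow_left₀ (by linarith) hsk 2).trans (hjump k (hs.trans hsk))
    have := ih (by nlinarith) hsq (by rwa [Nat.add_right_comm, Nat.add_assoc])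
    rwa [← pow_mul, ← pow_succ'] at this

end MarkedTimes

section Orbit

variable {c : ℕ → ℂ} {msq M : ℕ → ℕ} {P : ℕ → ℂ → ℂ} {Q : ℕ → ℕ → ℂ → ℂ}

theorem continuous_Q_zero (hP1 : ∀ k, 1 ≤ k → ∀ z, P (M k) z = z ^ 2 + c k)
    (hP2 : ∀ n, (∀ k, 1 ≤ k → M k ≠ n) → ∀ z, P n z = z ^ 2)
    (hQ0 : ∀ n z, Q n n z = z) (hQs : ∀ a n z, a ≤ n → Q a (n + 1) z = P (n + 1) (Q a n z))
    (n : ℕ) : Continuous (Q 0 n) := by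
  have hP : ∀ n, Continuous (P n) := by
    intro n
    by_cases h : ∃ k, 1 ≤ k ∧ M k = n
    · obtain ⟨k, hk, rfl⟩ := h
      rw [show P (M k) = fun z => z ^ 2 + c k from funext (hP1 k hk)]
      fun_prop
    · push Not at h
      rw [show P n = fun z => z ^ 2 from funext (hP2 n h)]
      fun_prop
  induction n with
  | zero => rw [show Q 0 0 = id from funext (hQ0 0)]; exact continuous_id
  | succ n ih =>
    rw [show Q 0 (n + 1) = P (n + 1) ∘ Q 0 n from funext fun z => hQs 0 n z n.zero_le]
    exact (hP (n + 1)).comp ih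

theorem strictMono_of_eq_add_succ (hMs : ∀ k, M (k + 1) = M k + (msq (k + 1) + 1)) :
    StrictMono M :=
  strictMono_nat_of_lt_succ fun k => by rw [hMs k]; omega

theorem Q_zero_marked_add_eq_pow (hMs : ∀ k, M (k + 1) = M k + (msq (k + 1) + 1))
    (hP2 : ∀ n, (∀ k, 1 ≤ k → M k ≠ n) → ∀ z, P n z = z ^ 2)
    (hQs : ∀ a n z, a ≤ n → Q a (n + 1) z = P (n + 1) (Q a n z))
    {k j : ℕ} (hj : j ≤ msq (k + 1)) (w : ℂ) : Q 0 (M k + j) w = Q 0 (M k) w ^ 2 ^ j := by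
  induction j with
  | zero => simp
  | succ j ih =>
    have hM := strictMono_of_eq_add_succ hMs
    have hunmarked : ∀ k', 1 ≤ k' → M k' ≠ M k + j + 1 := by
      intro k' _ hk'
      have h1 : k < k' := hM.lt_iff_lt.mp (by omega)
      have h2 : k' < k + 1 := hM.lt_iff_lt.mp (by rw [hMs k]; omega)
      omega
    rw [← Nat.add_assoc, hQs 0 _ w (Nat.zero_le _), hP2 _ hunmarked, ih (by omega), ← pow_mul,
      ← pow_succ]

theorem Q_zero_marked_succ_eq (hMs : ∀ k, M (k + 1) = M k + (msq (k + 1) + 1))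
    (hP1 : ∀ k, 1 ≤ k → ∀ z, P (M k) z = z ^ 2 + c k)
    (hP2 : ∀ n, (∀ k, 1 ≤ k → M k ≠ n) → ∀ z, P n z = z ^ 2)
    (hQs : ∀ a n z, a ≤ n → Q a (n + 1) z = P (n + 1) (Q a n z)) (k : ℕ) (w : ℂ) :
    Q 0 (M (k + 1)) w = Q 0 (M k) w ^ 2 ^ (msq (k + 1) + 1) + c (k + 1) := by
  rw [hMs k, ← Nat.add_assoc, hQs 0 _ w (Nat.zero_le _), Nat.add_assoc, ← hMs k,
    hP1 _ k.succ_pos, Q_zero_marked_add_eq_pow hMs hP2 hQs le_rfl, ← pow_mul, ← pow_succ]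

theorem norm_Q_zero_marked_le_norm (hMs : ∀ k, M (k + 1) = M k + (msq (k + 1) + 1))
    (hP2 : ∀ n, (∀ k, 1 ≤ k → M k ≠ n) → ∀ z, P n z = z ^ 2)
    (hQs : ∀ a n z, a ≤ n → Q a (n + 1) z = P (n + 1) (Q a n z))
    {k n : ℕ} {w : ℂ} (hkn : M k ≤ n) (hnk : n < M (k + 1)) (h1 : 1 ≤ ‖Q 0 (M k) w‖) :
    ‖Q 0 (M k) w‖ ≤ ‖Q 0 n w‖ := by
  obtain ⟨j, rfl⟩ := Nat.exists_eq_add_of_le hkn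
  rw [Q_zero_marked_add_eq_pow hMs hP2 hQs (by rw [hMs k] at hnk; omega), norm_pow]
  exact le_self_pow₀ h1 (by positivity)

theorem sq_norm_Q_zero_marked_le (hMs : ∀ k, M (k + 1) = M k + (msq (k + 1) + 1))
    (hP1 : ∀ k, 1 ≤ k → ∀ z, P (M k) z = z ^ 2 + c k)
    (hP2 : ∀ n, (∀ k, 1 ≤ k → M k ≠ n) → ∀ z, P n z = z ^ 2)
    (hQs : ∀ a n z, a ≤ n → Q a (n + 1) z = P (n + 1) (Q a n z)) {k : ℕ} {w : ℂ}
    (hc : 4 ≤ ‖c (k + 1)‖) (hinv : √‖c (k + 1)‖ + 1 ≤ 2 ^ 2 ^ msq (k + 1))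
    (h2 : 2 ≤ ‖Q 0 (M k) w‖) : ‖Q 0 (M k) w‖ ^ 2 ≤ ‖Q 0 (M (k + 1)) w‖ := by
  rw [Q_zero_marked_succ_eq hMs hP1 hP2 hQs]
  exact sq_norm_le_norm_pow_two_pow_add h2 hc hinv

end Orbit

theorem stmt_10_general
    (c : ℕ → ℂ) (msq : ℕ → ℕ)
    (hc : ∀ k, 1 ≤ k → 4 < ‖c k‖)
    (hinv : ∀ k, 1 ≤ k → Real.sqrt (‖c k‖) + 1 < (2 : ℝ) ^ 2 ^ msq k)
    (M : ℕ → ℕ)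
    (hMs : ∀ k, M (k + 1) = M k + (msq (k + 1) + 1))
    (P : ℕ → ℂ → ℂ)
    (hP1 : ∀ k, 1 ≤ k → ∀ z, P (M k) z = z ^ 2 + c k)
    (hP2 : ∀ n, (∀ k, 1 ≤ k → M k ≠ n) → ∀ z, P n z = z ^ 2)
    (Q : ℕ → ℕ → ℂ → ℂ)
    (hQ0 : ∀ n z, Q n n z = z)
    (hQs : ∀ a n z, a ≤ n → Q a (n + 1) z = P (n + 1) (Q a n z)) :
    ∀ z : ℂ, (∃ k, 1 ≤ k ∧ 2 < ‖Q 0 (M k) z‖) →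
      ∃ U : Set ℂ, IsOpen U ∧ z ∈ U ∧
        Tendsto (fun n => sInf ((fun w => ‖Q 0 n w‖) '' U))
          atTop atTop ∧
        Tendsto (fun n => ‖Q 0 n z‖) atTop atTop := by
  rintro z ⟨k, -, hz⟩
  obtain ⟨r, hr, hrz⟩ := exists_between hz
  set U := {w | r < ‖Q 0 (M k) w‖}
  have hU : IsOpen U :=
    isOpen_lt continuous_const (continuous_Q_zero hP1 hP2 hQ0 hQs (M k)).norm
  have hzU : z ∈ U := hrz
  have hescape : ∀ B, ∀ᶠ n in atTop, ∀ w ∈ U, B ≤ ‖Q 0 n w‖ := by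
    intro B
    obtain ⟨j, hj⟩ : ∃ j : ℕ, B ≤ r ^ 2 ^ j :=
      ((tendsto_pow_atTop_atTop_of_one_lt (by linarith : 1 < r)).comp
        (tendsto_pow_atTop_atTop_of_one_lt one_lt_two)).eventually_ge_atTop B |>.exists
    filter_upwards [eventually_ge_atTop (M (k + j))] with n hn w hw
    exact hj.trans (pow_two_pow_le_of_marked_le (a := fun n => ‖Q 0 n w‖)
      (strictMono_of_eq_add_succ hMs)
      (fun _ _ hkn hnk h2 => norm_Q_zero_marked_le_norm hMs hP2 hQs hkn hnk (by linarith))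
      (fun k' => sq_norm_Q_zero_marked_le hMs hP1 hP2 hQs (hc _ k'.succ_pos).le
        (hinv _ k'.succ_pos).le)
      hr.le hw.le hn)
  exact ⟨U, hU, hzU, tendsto_sInf_image_atTop ⟨z, hzU⟩ hescape,
    tendsto_atTop.2 fun B => (hescape B).mono fun n h => h z hzU⟩

/-- If |Q_{M_k}(z)| > 2 for some k ≥ 1, then there is an open
neighbourhood U of z on which the orbit escapes to infinity locally uniformly:
inf_{w ∈ U} |Q_n(w)| → ∞; in particular |Q_n(z)| → ∞. -/
theorem stmt_10
    (c : ℕ → ℂ) (msq : ℕ → ℕ)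
    (hc : ∀ k, 1 ≤ k → 4 < ‖c k‖)
    (hmsq : ∀ k, 1 ≤ k → 1 ≤ msq k)
    (hinv : ∀ k, 1 ≤ k → Real.sqrt (‖c k‖) + 1 < (2 : ℝ) ^ 2 ^ msq k)
    (M : ℕ → ℕ) (hM0 : M 0 = 0)
    (hMs : ∀ k, M (k + 1) = M k + (msq (k + 1) + 1))
    (P : ℕ → ℂ → ℂ)
    (hP1 : ∀ k, 1 ≤ k → ∀ z, P (M k) z = z ^ 2 + c k)
    (hP2 : ∀ n, (∀ k, 1 ≤ k → M k ≠ n) → ∀ z, P n z = z ^ 2)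
    (Q : ℕ → ℕ → ℂ → ℂ)
    (hQ0 : ∀ n z, Q n n z = z)
    (hQs : ∀ a n z, a ≤ n → Q a (n + 1) z = P (n + 1) (Q a n z))
    (S : ℕ → Set ℂ)
    (hS : ∀ k, S k = {z : ℂ | ‖Q 0 (M k) z‖ ≤ 2}) :
    ∀ z : ℂ, (∃ k, 1 ≤ k ∧ 2 < ‖Q 0 (M k) z‖) →
      ∃ U : Set ℂ, IsOpen U ∧ z ∈ U ∧
        Tendsto (fun n => sInf ((fun w => ‖Q 0 n w‖) '' U))
          atTop atTop ∧
        Tendsto (fun n => ‖Q 0 n z‖) atTop atTop :=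
  stmt_10_general c msq hc hinv M hMs P hP1 hP2 Q hQ0 hQs
end

section
/- Assume additionally the stronger condition 2^(2^(m_k)) ≥ 2√|c_k| for all k, and that limsup_{k→∞} |c_k| = +∞. Then for every m ≥ 0 the m-th iterated Julia set J_m = Q_m(E) is pointwise thin (and hence hereditarily non uniformly perfect). -/
open Complex Metric Set Filter

/-- A round annulus {w : r < |w − z| < R} separates F: it is disjoint from F while
F meets both the closed disc D̄(z,r) and the set {w : |w − z| ≥ R}. -/
def SeparatesAnnulus (F : Set ℂ) (z : ℂ) (r R : ℝ) : Prop :=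
  (∀ w ∈ F, ¬(r < ‖w - z‖ ∧ ‖w - z‖ < R)) ∧
  (∃ w ∈ F, ‖w - z‖ ≤ r) ∧
  (∃ w ∈ F, R ≤ ‖w - z‖)

/-- F is pointwise thin: for each z ∈ F there are 0 < r_n < R_n with R_n → 0 and
R_n/r_n → ∞ such that each round annulus A(z, r_n, R_n) separates F. -/
def PointwiseThin (F : Set ℂ) : Prop :=
  ∀ z ∈ F, ∃ r R : ℕ → ℝ,
    (∀ n, 0 < r n ∧ r n < R n) ∧
    Filter.Tendsto R Filter.atTop (nhds 0) ∧
    Filter.Tendsto (fun n => R n / r n) Filter.atTop Filter.atTop ∧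
    ∀ n, SeparatesAnnulus F z (r n) (R n)

/-- E is hereditarily non uniformly perfect: no compact subset with at least two
points admits a finite upper bound on the moduli of separating round annuli. -/
def HNUP (E : Set ℂ) : Prop :=
  ∀ F ⊆ E, IsCompact F → (∃ a ∈ F, ∃ b ∈ F, a ≠ b) →
    ∀ C > 0, ∃ (z : ℂ) (r R : ℝ), 0 < r ∧ r < R ∧ C < Real.log (R / r) ∧
      SeparatesAnnulus F z r R

/-!
Every point `x ∈ E` has `1 ≤ ‖Q_{M_l}(x)‖ ≤ 2` for all `l`, because
`Q_{M_{l+1}} = Q_{M_l} ^ N + c_{l+1}` with `N = 2 ^ (m_{l+1} + 1)` and `‖c_{l+1}‖ + 2 ≤ 2 ^ N`;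
hence no orbit enters the unit disc. Fix `z = Q_m(ζ)` and a block `l` with `‖c_{l+1}‖` huge, and
let `A = ∏_{m ≤ i < M_l} 2 ‖Q_i(ζ)‖` be the derivative of `Q_{m,M_l}` along the orbit. Two points
of `J_m` at distance less than `R ≈ 1 / (N A)` stay in the linear regime up to time `M_l`, after
which `w ↦ w ^ N` expands their distance by about `N ‖c_{l+1}‖`, while `Q_{M_{l+1}}` maps both
into `D̄(0, 2)`. So they are within `r ≈ 1 / (N ‖c_{l+1}‖ A)`, and the annulus `r < |w - z| < R`
separates `J_m` because `-z ∈ J_m`: the maps are even and the block maps have preimages of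
`D̄(0, 2)` inside `D̄(0, 2)`.
-/

theorem separatesAnnulus_of_gap {F : Set ℂ} {z w : ℂ} {r R : ℝ} (hz : z ∈ F) (hr : 0 ≤ r)
    (hw : w ∈ F) (hwR : R ≤ ‖w - z‖) (hgap : ∀ v ∈ F, ‖v - z‖ < R → ‖v - z‖ ≤ r) :
    SeparatesAnnulus F z r R :=
  ⟨fun v hv ⟨hrv, hvR⟩ => (hgap v hv hvR).not_gt hrv, ⟨z, hz, by simpa using hr⟩, ⟨w, hw, hwR⟩⟩

theorem pointwiseThin_of_forall {F : Set ℂ}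
    (h : ∀ z ∈ F, ∀ ε > 0, ∀ C : ℝ, ∃ r R, 0 < r ∧ r < R ∧ R < ε ∧ C < R / r ∧
      SeparatesAnnulus F z r R) :
    PointwiseThin F := by
  intro z hz
  choose r R hr hrR hRε hC hsep using fun n : ℕ => h z hz (1 / (n + 1)) (by positivity) n
  refine ⟨r, R, fun n => ⟨hr n, hrR n⟩, ?_, ?_, hsep⟩
  · exact squeeze_zero (fun n => ((hr n).trans (hrR n)).le) (fun n => (hRε n).le)
      tendsto_one_div_add_atTop_nhds_zero_nat
  · exact tendsto_atTop_mono (fun n => (hC n).le) tendsto_natCast_atTop_atTop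

theorem PointwiseThin.hnup {F : Set ℂ} (hF : PointwiseThin F) : HNUP F := by
  intro K hKF _ ⟨a, ha, b, hb, hab⟩ C _
  obtain ⟨r, R, hrR, hR0, hRr, hsep⟩ := hF a (hKF ha)
  have hba : 0 < ‖b - a‖ := norm_pos_iff.mpr (sub_ne_zero.mpr hab.symm)
  obtain ⟨n, hRn, hCn⟩ :=
    ((hR0.eventually_lt_const hba).and (hRr.eventually_gt_atTop (Real.exp C))).exists
  have hratio : 0 < R n / r n := div_pos ((hrR n).1.trans (hrR n).2) (hrR n).1
  refine ⟨a, r n, R n, (hrR n).1, (hrR n).2, (Real.lt_log_iff_exp_lt hratio).mpr hCn, ?_⟩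
  exact ⟨fun w hw => (hsep n).1 w (hKF hw), ⟨a, ha, by simpa using (hrR n).1.le⟩, ⟨b, hb, hRn.le⟩⟩

theorem abs_sub_mul_prod_le {D a : ℕ → ℝ} {m n : ℕ} (ha : ∀ j, 2 ≤ a j)
    (hD : ∀ j, |D (j + 1) - a j * D j| ≤ D j ^ 2) (hm : 0 ≤ D m) (hmn : m ≤ n)
    (hsmall : 4 * (D m * ∏ i ∈ Finset.Ico m n, a i) ≤ 1) :
    |D n - D m * ∏ i ∈ Finset.Ico m n, a i| ≤ 4 * (D m * ∏ i ∈ Finset.Ico m n, a i) ^ 2 := by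
  induction n, hmn using Nat.le_induction with
  | base => simpa using sq_nonneg (D m)
  | succ j hmj ih =>
    rw [Finset.prod_Ico_succ_top hmj, ← mul_assoc (D m)] at hsmall ⊢
    set x := D m * ∏ i ∈ Finset.Ico m j, a i
    have hx : 0 ≤ x := mul_nonneg hm (Finset.prod_nonneg fun i _ => by linarith [ha i])
    have haj := ha j
    have hx4 : 4 * x ≤ 1 := by nlinarith
    have hIH := abs_le.mp (ih hx4)
    have hDj : D j ^ 2 ≤ 4 * x ^ 2 := by
      have h0 : 0 ≤ D j := by nlinarith
      have h2 : D j ≤ 2 * x := by nlinarith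
      nlinarith
    calc |D (j + 1) - x * a j| = |(D (j + 1) - a j * D j) + a j * (D j - x)| := by ring_nf
      _ ≤ |D (j + 1) - a j * D j| + a j * |D j - x| := by
          grw [abs_add_le, abs_mul, abs_of_nonneg (by linarith : 0 ≤ a j)]
      _ ≤ 4 * x ^ 2 + a j * (4 * x ^ 2) := by
          gcongr
          · exact (hD j).trans hDj
          · exact ih hx4
      _ ≤ 4 * (x * a j) ^ 2 := by nlinarith

theorem norm_one_add_pow_sub_one_sub_le (u : ℂ) {N : ℕ} (h : N * ‖u‖ ≤ 1) :
    ‖(1 + u) ^ N - 1 - N * u‖ ≤ (N * ‖u‖) ^ 2 := by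
  induction N with
  | zero => simp
  | succ N ih =>
    push_cast at h ⊢
    have hu := norm_nonneg u
    have hN : (N : ℝ) * ‖u‖ ≤ 1 := by nlinarith
    have h1u : ‖1 + u‖ ≤ 1 + ‖u‖ := (norm_add_le _ _).trans (by simp)
    calc ‖(1 + u) ^ (N + 1) - 1 - (N + 1) * u‖
        = ‖((1 + u) ^ N - 1 - N * u) * (1 + u) + N * u ^ 2‖ := by ring_nf
      _ ≤ (N * ‖u‖) ^ 2 * (1 + ‖u‖) + N * ‖u‖ ^ 2 := by
          grw [norm_add_le, norm_mul, ih hN, h1u, norm_mul, norm_pow, Complex.norm_natCast]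
      _ ≤ ((N + 1) * ‖u‖) ^ 2 := by
          nlinarith [mul_le_mul_of_nonneg_right hN (mul_nonneg (mul_nonneg N.cast_nonneg hu) hu)]

theorem norm_one_add_pow_sub_one_ge (u : ℂ) {N : ℕ} (h : N * ‖u‖ ≤ 1 / 4) :
    3 / 4 * (N * ‖u‖) ≤ ‖(1 + u) ^ N - 1‖ := by
  have hrem := norm_one_add_pow_sub_one_sub_le u (N := N) (by linarith)
  have htri : ‖(N : ℂ) * u‖ ≤ ‖(1 + u) ^ N - 1‖ + ‖(1 + u) ^ N - 1 - N * u‖ := by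
    simpa using norm_sub_le ((1 + u) ^ N - 1) ((1 + u) ^ N - 1 - N * u)
  rw [norm_mul, Complex.norm_natCast] at htri
  nlinarith [mul_nonneg N.cast_nonneg (norm_nonneg u)]

theorem abs_norm_sub_mul_le {z w : ℂ} :
    |‖w * (w + 2 * z)‖ - 2 * ‖z‖ * ‖w‖| ≤ ‖w‖ ^ 2 := by
  have h := abs_norm_sub_norm_le (w + 2 * z) (2 * z)
  rw [add_sub_cancel_right, norm_mul (2 : ℂ), Complex.norm_two] at h
  rw [norm_mul, show ‖w‖ * ‖w + 2 * z‖ - 2 * ‖z‖ * ‖w‖ = ‖w‖ * (‖w + 2 * z‖ - 2 * ‖z‖) by ring,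
    abs_mul, abs_norm, sq]
  exact mul_le_mul_of_nonneg_left h (norm_nonneg w)

/-- From time `m` to time `n` the two orbits stay in the linear regime, where their distance is
multiplied by `∏ 2 ‖Z i‖` up to a factor `1 ± 1/8`; the `N`-th power then multiplies it by at
least `N κ / 2`, and the result is at most `4`. -/
theorem norm_sub_mul_le_of_norm_pow_sub_pow_le {Z V : ℕ → ℂ} {m n N : ℕ} {κ : ℝ}
    (hrec : ∀ j, V (j + 1) - Z (j + 1) = (V j - Z j) * (V j + Z j))
    (hZ : ∀ j, 1 ≤ ‖Z j‖) (hZn : ‖Z n‖ ≤ 2) (hmn : m ≤ n) (hN : 1 ≤ N) (hκ : 0 < κ)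
    (hκZ : κ ≤ ‖Z n‖ ^ N) (hpow : ‖V n ^ N - Z n ^ N‖ ≤ 4)
    (hclose : ‖V m - Z m‖ * (32 * N * ∏ i ∈ Finset.Ico m n, 2 * ‖Z i‖) < 1) :
    ‖V m - Z m‖ * (N * κ * ∏ i ∈ Finset.Ico m n, 2 * ‖Z i‖) ≤ 16 := by
  set D : ℕ → ℝ := fun j => ‖V j - Z j‖
  set X := D m * ∏ i ∈ Finset.Ico m n, 2 * ‖Z i‖
  have hN' : (1 : ℝ) ≤ N := by exact_mod_cast hN
  have hX0 : 0 ≤ X := mul_nonneg (norm_nonneg _) (Finset.prod_nonneg fun i _ => by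
    linarith [hZ i])
  have hX : 32 * X ≤ 1 := by
    change D m * (32 * N * ∏ i ∈ Finset.Ico m n, 2 * ‖Z i‖) < 1 at hclose
    nlinarith
  have hdist : |D n - X| ≤ 4 * X ^ 2 := by
    refine abs_sub_mul_prod_le (fun j => by linarith [hZ j]) (fun j => ?_) (norm_nonneg _) hmn
      (by linarith)
    simpa [D, hrec, show V j + Z j = (V j - Z j) + 2 * Z j by ring] using
      abs_norm_sub_mul_le (z := Z j) (w := V j - Z j)
  have hDn := abs_le.mp hdist
  have hZn0 : Z n ≠ 0 := norm_pos_iff.mp (by linarith [hZ n])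
  set u := (V n - Z n) / Z n
  have hu : ‖u‖ * ‖Z n‖ = D n := by simp [u, D, hZn0]
  have hNu : N * ‖u‖ ≤ 1 / 4 := by nlinarith [hZ n, norm_nonneg u]
  have hVZ : V n ^ N - Z n ^ N = Z n ^ N * ((1 + u) ^ N - 1) := by
    rw [show V n = Z n * (1 + u) by rw [mul_add, mul_one, mul_div_cancel₀ _ hZn0]; ring, mul_pow]
    ring
  have hlow : κ * (3 / 4 * (N * ‖u‖)) ≤ 4 := by
    calc κ * (3 / 4 * (N * ‖u‖)) ≤ ‖Z n‖ ^ N * ‖(1 + u) ^ N - 1‖ := by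
          gcongr
          exact norm_one_add_pow_sub_one_ge u hNu
      _ = ‖V n ^ N - Z n ^ N‖ := by rw [hVZ, norm_mul, norm_pow]
      _ ≤ 4 := hpow
  have hNκD : N * κ * D n ≤ 32 / 3 := by
    rw [← hu]
    nlinarith [mul_le_mul_of_nonneg_left hZn
      (mul_nonneg (mul_nonneg (by positivity : (0 : ℝ) ≤ N) hκ.le) (norm_nonneg u))]
  calc D m * (N * κ * ∏ i ∈ Finset.Ico m n, 2 * ‖Z i‖) = N * κ * X := by ring
    _ ≤ N * κ * (8 / 7 * D n) := by gcongr; nlinarith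
    _ ≤ 16 := by nlinarith

theorem exists_lt_of_forall_exists_lt {u : ℕ → ℝ} (hu : ∀ C, ∃ k, C < u k) (C : ℝ) (K : ℕ) :
    ∃ k, K < k ∧ C < u k := by
  obtain ⟨k, hk⟩ := hu (max C (∑ j ∈ Finset.range (K + 1), |u j|))
  refine ⟨k, ?_, (le_max_left _ _).trans_lt hk⟩
  by_contra hkK
  have := Finset.single_le_sum (fun j _ => abs_nonneg (u j))
    (Finset.mem_range.2 (by omega : k < K + 1))
  linarith [le_abs_self (u k), le_max_right C (∑ j ∈ Finset.range (K + 1), |u j|)]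

theorem add_two_le_sq_of_two_sqrt_le {x B : ℝ} (hx : 1 ≤ x) (h : 2 * √x ≤ B) : x + 2 ≤ B ^ 2 := by
  have h4x : 4 * x ≤ B ^ 2 := by
    calc 4 * x = (2 * √x) ^ 2 := by rw [mul_pow, Real.sq_sqrt (by linarith)]; norm_num
      _ ≤ B ^ 2 := by gcongr
  linarith

theorem exists_mem_block {M : ℕ → ℕ} (hM0 : M 0 = 0) (hM : StrictMono M) (j : ℕ) :
    ∃ l, M l ≤ j ∧ j < M (l + 1) := by
  classical
  have hex : ∃ l, j < M l := ⟨j + 1, (Nat.lt_succ_self j).trans_le (hM.id_le _)⟩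
  obtain ⟨l, hl⟩ : ∃ l, Nat.find hex = l + 1 := Nat.exists_eq_succ_of_ne_zero fun h => by
    simpa [h, hM0] using Nat.find_spec hex
  exact ⟨l, not_lt.mp (Nat.find_min hex (by omega)), hl ▸ Nat.find_spec hex⟩

theorem one_le_norm_of_norm_pow_add_le {y c : ℂ} {N : ℕ} (hc : 4 < ‖c‖)
    (h : ‖y ^ N + c‖ ≤ 2) : 1 ≤ ‖y‖ := by
  by_contra! hy
  have hyN : ‖y ^ N‖ ≤ 1 := by rw [norm_pow]; exact pow_le_one₀ (norm_nonneg y) hy.le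
  have := norm_sub_le (y ^ N + c) (y ^ N)
  rw [add_sub_cancel_left] at this
  linarith

theorem norm_le_two_of_norm_pow_add_le {y c : ℂ} {N : ℕ} (hN : ‖c‖ + 2 ≤ 2 ^ N)
    (h : ‖y ^ N + c‖ ≤ 2) : ‖y‖ ≤ 2 := by
  have hN0 : N ≠ 0 := by rintro rfl; linarith [norm_nonneg c, pow_zero (2 : ℝ)]
  refine le_of_pow_le_pow_left₀ hN0 zero_le_two ?_
  have := norm_sub_le (y ^ N + c) c
  rw [add_sub_cancel_right, norm_pow] at this
  linarith

theorem exists_pow_add_eq {w c : ℂ} {N : ℕ} (hN : ‖c‖ + 2 ≤ 2 ^ N) (hw : ‖w‖ ≤ 2) :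
    ∃ y, ‖y‖ ≤ 2 ∧ y ^ N + c = w := by
  have hN0 : N ≠ 0 := by rintro rfl; linarith [norm_nonneg c, pow_zero (2 : ℝ)]
  obtain ⟨y, hy⟩ := IsAlgClosed.exists_pow_nat_eq (w - c) (Nat.pos_of_ne_zero hN0)
  have hyc : y ^ N + c = w := by rw [hy, sub_add_cancel]
  exact ⟨y, norm_le_two_of_norm_pow_add_le hN (hyc ▸ hw), hyc⟩

section Blocks

variable {G : ℕ → ℂ → ℂ} {c : ℕ → ℂ} {N : ℕ → ℕ}

theorem norm_mem_Icc_of_forall_norm_le_two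
    (hG : ∀ l x, G (l + 1) x = G l x ^ N (l + 1) + c (l + 1)) (hc : ∀ k, 1 ≤ k → 4 < ‖c k‖)
    (hN : ∀ k, 1 ≤ k → ‖c k‖ + 2 ≤ 2 ^ N k) {x : ℂ} (hx : ∀ k, 1 ≤ k → ‖G k x‖ ≤ 2) (l : ℕ) :
    ‖G l x‖ ∈ Icc 1 2 := by
  have h := hG l x ▸ hx (l + 1) l.succ_pos
  exact ⟨one_le_norm_of_norm_pow_add_le (hc _ l.succ_pos) h,
    norm_le_two_of_norm_pow_add_le (hN _ l.succ_pos) h⟩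

theorem exists_eq_forall_norm_le_two (hG0 : ∀ x, G 0 x = x)
    (hG : ∀ l x, G (l + 1) x = G l x ^ N (l + 1) + c (l + 1))
    (hN : ∀ k, 1 ≤ k → ‖c k‖ + 2 ≤ 2 ^ N k) (l : ℕ) {y : ℂ} (hy : ‖y‖ ≤ 2) :
    ∃ x, G l x = y ∧ ∀ k, 1 ≤ k → k ≤ l → ‖G k x‖ ≤ 2 := by
  induction l generalizing y with
  | zero => exact ⟨y, hG0 y, fun k hk hk0 => by omega⟩
  | succ l ih =>
    obtain ⟨y', hy', hy'y⟩ := exists_pow_add_eq (hN (l + 1) l.succ_pos) hy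
    obtain ⟨x, hx, hxk⟩ := ih hy'
    have hxl : G (l + 1) x = y := by rw [hG, hx, hy'y]
    refine ⟨x, hxl, fun k hk hkl => ?_⟩
    rcases hkl.lt_or_eq with hkl | rfl
    · exact hxk k hk (by omega)
    · rwa [hxl]

end Blocks

section Composition

variable {P : ℕ → ℂ → ℂ} {Q : ℕ → ℕ → ℂ → ℂ}

theorem Q_comp (hQ0 : ∀ n z, Q n n z = z)
    (hQs : ∀ a n z, a ≤ n → Q a (n + 1) z = P (n + 1) (Q a n z))
    {a b n : ℕ} (hab : a ≤ b) (hbn : b ≤ n) (x : ℂ) : Q b n (Q a b x) = Q a n x := by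
  induction n, hbn using Nat.le_induction with
  | base => rw [hQ0]
  | succ n hbn ih => rw [hQs b n _ hbn, ih, hQs a n x (hab.trans hbn)]

theorem Q_eq_pow (hQ0 : ∀ n z, Q n n z = z)
    (hQs : ∀ a n z, a ≤ n → Q a (n + 1) z = P (n + 1) (Q a n z))
    {a n : ℕ} (han : a ≤ n) (hsq : ∀ j, a < j → j ≤ n → ∀ z, P j z = z ^ 2) (x : ℂ) :
    Q a n x = x ^ 2 ^ (n - a) := by
  induction n, han using Nat.le_induction with
  | base => rw [hQ0, Nat.sub_self, pow_zero, pow_one]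
  | succ n han ih =>
    rw [hQs a n x han, hsq (n + 1) (by omega) le_rfl, ih fun j h1 h2 => hsq j h1 (by omega),
      ← pow_mul, Nat.sub_add_comm han, pow_succ]

theorem Q_succ_sub (hQs : ∀ a n z, a ≤ n → Q a (n + 1) z = P (n + 1) (Q a n z))
    (hP : ∀ j z, P j z = z ^ 2 + P j 0) {a j : ℕ} (haj : a ≤ j) (x y : ℂ) :
    Q a (j + 1) x - Q a (j + 1) y = (Q a j x - Q a j y) * (Q a j x + Q a j y) := by
  rw [hQs a j x haj, hQs a j y haj, hP _ (Q a j x), hP _ (Q a j y)]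
  ring

theorem Q_eq_of_Q_eq_neg (hQ0 : ∀ n z, Q n n z = z)
    (hQs : ∀ a n z, a ≤ n → Q a (n + 1) z = P (n + 1) (Q a n z))
    (hP : ∀ j z, P j z = z ^ 2 + P j 0) {a t n : ℕ} (hat : a ≤ t) (htn : t < n) {x y : ℂ}
    (hxy : Q a t x = -Q a t y) : Q a n x = Q a n y := by
  rw [← Q_comp hQ0 hQs hat htn.le, ← Q_comp hQ0 hQs hat htn.le y, hxy]
  induction n, htn using Nat.le_induction with
  | base => rw [hQs t t _ le_rfl, hQs t t _ le_rfl, hQ0, hQ0, hP, hP (t + 1) (Q a t y), neg_sq]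
  | succ n htn ih => rw [hQs t n _ (by omega), hQs t n _ (by omega), ih]

variable {c : ℕ → ℂ} {M : ℕ → ℕ} {msq : ℕ → ℕ}

theorem P_eq_sq_add_P_zero (hP1 : ∀ k, 1 ≤ k → ∀ z, P (M k) z = z ^ 2 + c k)
    (hP2 : ∀ n, (∀ k, 1 ≤ k → M k ≠ n) → ∀ z, P n z = z ^ 2) (j : ℕ) (z : ℂ) :
    P j z = z ^ 2 + P j 0 := by
  by_cases h : ∃ k, 1 ≤ k ∧ M k = j
  · obtain ⟨k, hk, rfl⟩ := h
    rw [hP1 k hk, hP1 k hk]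
    ring
  · push Not at h
    rw [hP2 j h, hP2 j h]
    ring

theorem P_eq_sq_of_mem_block (hM : StrictMono M)
    (hP2 : ∀ n, (∀ k, 1 ≤ k → M k ≠ n) → ∀ z, P n z = z ^ 2) {l j : ℕ} (h1 : M l < j)
    (h2 : j < M (l + 1)) (z : ℂ) : P j z = z ^ 2 :=
  hP2 j (fun k _ hk => by
    subst hk
    have := hM.lt_iff_lt.mp h1
    have := hM.lt_iff_lt.mp h2
    omega) z

theorem Q_eq_pow_of_mem_block (hQ0 : ∀ n z, Q n n z = z)
    (hQs : ∀ a n z, a ≤ n → Q a (n + 1) z = P (n + 1) (Q a n z)) (hM : StrictMono M)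
    (hP2 : ∀ n, (∀ k, 1 ≤ k → M k ≠ n) → ∀ z, P n z = z ^ 2) {l j : ℕ} (h1 : M l ≤ j)
    (h2 : j < M (l + 1)) (x : ℂ) : Q (M l) j x = x ^ 2 ^ (j - M l) :=
  Q_eq_pow hQ0 hQs h1 (fun _ hi1 hi2 => P_eq_sq_of_mem_block hM hP2 hi1 (by omega)) x

theorem Q_block (hQ0 : ∀ n z, Q n n z = z)
    (hQs : ∀ a n z, a ≤ n → Q a (n + 1) z = P (n + 1) (Q a n z)) (hM : StrictMono M)
    (hMs : ∀ k, M (k + 1) = M k + (msq (k + 1) + 1))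
    (hP1 : ∀ k, 1 ≤ k → ∀ z, P (M k) z = z ^ 2 + c k)
    (hP2 : ∀ n, (∀ k, 1 ≤ k → M k ≠ n) → ∀ z, P n z = z ^ 2) (l : ℕ) (x : ℂ) :
    Q (M l) (M (l + 1)) x = x ^ 2 ^ (msq (l + 1) + 1) + c (l + 1) := by
  have hsucc : M (l + 1) = M l + msq (l + 1) + 1 := by rw [hMs]; ring
  have hlast : M l + msq (l + 1) < M (l + 1) := by omega
  rw [hsucc, hQs _ _ _ (by omega),
    Q_eq_pow_of_mem_block hQ0 hQs hM hP2 (by omega) hlast, ← hsucc, hP1 _ l.succ_pos,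
    Nat.add_sub_cancel_left, ← pow_mul, pow_succ]

end Composition

section Orbits

variable {f : ℕ → ℂ → ℂ} {E : Set ℂ} {c : ℕ → ℂ} {M N : ℕ → ℕ}

theorem one_le_norm_orbit (hM0 : M 0 = 0) (hM : StrictMono M)
    (hpow : ∀ l j, M l ≤ j → j < M (l + 1) → ∀ x, f j x = f (M l) x ^ 2 ^ (j - M l)) {x : ℂ}
    (hx : ∀ l, 1 ≤ ‖f (M l) x‖) (j : ℕ) : 1 ≤ ‖f j x‖ := by
  obtain ⟨l, h1, h2⟩ := exists_mem_block hM0 hM j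
  rw [hpow l j h1 h2, norm_pow]
  exact one_le_pow₀ (hx l)

theorem neg_mem_image (hM0 : M 0 = 0) (hM : StrictMono M) (hf0 : ∀ x, f 0 x = x)
    (hpow : ∀ l j, M l ≤ j → j < M (l + 1) → ∀ x, f j x = f (M l) x ^ 2 ^ (j - M l))
    (hblock : ∀ l x, f (M (l + 1)) x = f (M l) x ^ N (l + 1) + c (l + 1))
    (heq : ∀ t n x y, t < n → f t x = -f t y → f n x = f n y)
    (hc : ∀ k, 1 ≤ k → 4 < ‖c k‖) (hN : ∀ k, 1 ≤ k → ‖c k‖ + 2 ≤ 2 ^ N k) (t : ℕ) :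
    ∀ z ∈ f t '' {x | ∀ k, 1 ≤ k → ‖f (M k) x‖ ≤ 2},
      -z ∈ f t '' {x | ∀ k, 1 ≤ k → ‖f (M k) x‖ ≤ 2} := by
  rintro _ ⟨ζ, hζ, rfl⟩
  obtain ⟨l, hl1, hl2⟩ := exists_mem_block hM0 hM t
  obtain ⟨ω, hω⟩ := IsAlgClosed.exists_pow_nat_eq (-1 : ℂ) (pow_pos two_pos (t - M l))
  have hω1 : ‖ω‖ = 1 :=
    norm_eq_one_of_pow_eq_one (by rw [pow_mul, hω, neg_one_sq] : ω ^ (2 ^ (t - M l) * 2) = 1)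
      (by positivity)
  obtain ⟨x, hx, hxk⟩ := exists_eq_forall_norm_le_two (G := fun l => f (M l))
    (fun x => by simp only [hM0, hf0]) hblock hN l (y := ω * f (M l) ζ)
    (by rw [norm_mul, hω1, one_mul]
        exact (norm_mem_Icc_of_forall_norm_le_two (G := fun l => f (M l)) hblock hc hN hζ l).2)
  have hxt : f t x = -f t ζ := by
    rw [hpow l t hl1 hl2, hpow l t hl1 hl2 ζ, hx, mul_pow, hω, neg_one_mul]
  refine ⟨x, fun k hk => ?_, hxt⟩
  rcases le_or_gt k l with hkl | hlk
  · exact hxk k hk hkl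
  · rw [heq t (M k) x ζ (hl2.trans_le (hM.monotone hlk)) hxt]
    exact hζ k hk

theorem norm_orbit_sub_mul_le
    (hsub : ∀ j x y, f (j + 1) x - f (j + 1) y = (f j x - f j y) * (f j x + f j y))
    (hblock : ∀ l x, f (M (l + 1)) x = f (M l) x ^ N (l + 1) + c (l + 1))
    (hle : ∀ x ∈ E, ∀ l, ‖f (M l) x‖ ≤ 2) (hge : ∀ x ∈ E, ∀ j, 1 ≤ ‖f j x‖)
    {ξ ζ : ℂ} (hξ : ξ ∈ E) (hζ : ζ ∈ E) {m l : ℕ} (hml : m ≤ M l) (hN : 1 ≤ N (l + 1))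
    (hc : 2 < ‖c (l + 1)‖)
    (hclose : ‖f m ξ - f m ζ‖ * (32 * N (l + 1) * ∏ i ∈ Finset.Ico m (M l), 2 * ‖f i ζ‖) < 1) :
    ‖f m ξ - f m ζ‖ * (N (l + 1) * (‖c (l + 1)‖ - 2) * ∏ i ∈ Finset.Ico m (M l), 2 * ‖f i ζ‖)
      ≤ 16 := by
  refine norm_sub_mul_le_of_norm_pow_sub_pow_le (Z := fun j => f j ζ) (V := fun j => f j ξ)
    (fun j => hsub j ξ ζ) (hge ζ hζ) (hle ζ hζ l) hml hN (by linarith) ?_ ?_ hclose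
  · rw [← norm_pow, ← add_sub_cancel_right (f (M l) ζ ^ N (l + 1)) (c (l + 1)), ← hblock]
    linarith [norm_sub_norm_le (c (l + 1)) (f (M (l + 1)) ζ), norm_sub_rev (c (l + 1))
      (f (M (l + 1)) ζ), hle ζ hζ (l + 1)]
  · rw [show f (M l) ξ ^ N (l + 1) - f (M l) ζ ^ N (l + 1)
      = f (M (l + 1)) ξ - f (M (l + 1)) ζ by rw [hblock, hblock]; ring]
    linarith [norm_sub_le (f (M (l + 1)) ξ) (f (M (l + 1)) ζ), hle ξ hξ (l + 1), hle ζ hζ (l + 1)]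

theorem annulus_radii {N κ A ε C : ℝ} {i : ℕ} (hN : 1 ≤ N) (hκ : 512 * max 1 C < κ)
    (hA : 2 ^ i ≤ A) (hi : (1 / 2) ^ i < ε) :
    0 < 16 / (N * κ * A) ∧ 16 / (N * κ * A) < 1 / (32 * N * A) ∧ 1 / (32 * N * A) < ε ∧
      C < 1 / (32 * N * A) / (16 / (N * κ * A)) ∧ 1 / (32 * N * A) ≤ 1 := by
  have hκ1 : 512 < κ := by linarith [le_max_left 1 C]
  have h1A : 1 ≤ A := (one_le_pow₀ (by norm_num : (1 : ℝ) ≤ 2)).trans hA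
  have hden : 0 < N * κ * A := by positivity
  refine ⟨by positivity, ?_, ?_, ?_, ?_⟩
  · rw [div_lt_div_iff₀ hden (by positivity)]
    nlinarith [mul_pos (by positivity : 0 < N) (by positivity : 0 < A)]
  · calc 1 / (32 * N * A) ≤ 1 / 2 ^ i := by gcongr; nlinarith
      _ < ε := by rwa [one_div_pow] at hi
  · rw [show 1 / (32 * N * A) / (16 / (N * κ * A)) = κ / 512 by field_simp; ring]
    linarith [le_max_right 1 C]
  · rw [div_le_one (by positivity)]
    nlinarith

theorem pointwiseThin_image (m : ℕ) (hM : ∀ l, l ≤ M l) (hN : ∀ k, 1 ≤ N k)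
    (hsub : ∀ j x y, f (j + 1) x - f (j + 1) y = (f j x - f j y) * (f j x + f j y))
    (hblock : ∀ l x, f (M (l + 1)) x = f (M l) x ^ N (l + 1) + c (l + 1))
    (hle : ∀ x ∈ E, ∀ l, ‖f (M l) x‖ ≤ 2) (hge : ∀ x ∈ E, ∀ j, 1 ≤ ‖f j x‖)
    (hneg : ∀ z ∈ f m '' E, -z ∈ f m '' E) (hc : ∀ C K, ∃ k, K < k ∧ C < ‖c k‖) :
    PointwiseThin (f m '' E) := by
  refine pointwiseThin_of_forall ?_
  rintro _ ⟨ζ, hζ, rfl⟩ ε hε C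
  obtain ⟨i, hi⟩ := exists_pow_lt_of_lt_one hε (by norm_num : (1 / 2 : ℝ) < 1)
  obtain ⟨k, hk, hck⟩ := hc (2 + 512 * max 1 C) (m + i)
  obtain ⟨l, rfl⟩ : ∃ l, k = l + 1 := ⟨k - 1, by omega⟩
  set A := ∏ j ∈ Finset.Ico m (M l), 2 * ‖f j ζ‖
  have hA : 2 ^ i ≤ A := calc
    (2 : ℝ) ^ i ≤ 2 ^ (M l - m) := pow_le_pow_right₀ (by norm_num) (by have := hM l; omega)
    _ = ∏ j ∈ Finset.Ico m (M l), (2 : ℝ) := by rw [Finset.prod_const, Nat.card_Ico]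
    _ ≤ A := Finset.prod_le_prod (fun _ _ => by norm_num) fun j _ => by linarith [hge ζ hζ j]
  obtain ⟨hr, hrR, hRε, hC, hR1⟩ :=
    annulus_radii (N := N (l + 1)) (κ := ‖c (l + 1)‖ - 2) (by exact_mod_cast hN (l + 1))
      (by linarith) hA hi
  refine ⟨_, _, hr, hrR, hRε, hC, separatesAnnulus_of_gap (mem_image_of_mem _ hζ) hr.le
    (hneg _ (mem_image_of_mem _ hζ)) ?_ ?_⟩
  · rw [show -f m ζ - f m ζ = -(2 * f m ζ) by ring, norm_neg, norm_mul, Complex.norm_two]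
    linarith [hge ζ hζ m]
  · rintro _ ⟨ξ, hξ, rfl⟩ hR
    rw [lt_div_iff₀ ((div_pos_iff_of_pos_left one_pos).mp (hr.trans hrR))] at hR
    rw [le_div_iff₀ ((div_pos_iff_of_pos_left (by norm_num)).mp hr)]
    exact norm_orbit_sub_mul_le hsub hblock hle hge hξ hζ (by linarith [hM l]) (hN _)
      (by linarith [le_max_left 1 C]) hR

end Orbits

theorem stmt_16_general
    (c : ℕ → ℂ) (msq : ℕ → ℕ)
    (hc : ∀ k, 1 ≤ k → 4 < ‖c k‖)
    (hinv : ∀ k, 1 ≤ k → 2 * Real.sqrt (‖c k‖) ≤ (2 : ℝ) ^ 2 ^ msq k)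
    (M : ℕ → ℕ) (hM0 : M 0 = 0)
    (hMs : ∀ k, M (k + 1) = M k + (msq (k + 1) + 1))
    (P : ℕ → ℂ → ℂ)
    (hP1 : ∀ k, 1 ≤ k → ∀ z, P (M k) z = z ^ 2 + c k)
    (hP2 : ∀ n, (∀ k, 1 ≤ k → M k ≠ n) → ∀ z, P n z = z ^ 2)
    (Q : ℕ → ℕ → ℂ → ℂ)
    (hQ0 : ∀ n z, Q n n z = z)
    (hQs : ∀ a n z, a ≤ n → Q a (n + 1) z = P (n + 1) (Q a n z))
    (S : ℕ → Set ℂ)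
    (hS : ∀ k, S k = {z : ℂ | ‖Q 0 (M k) z‖ ≤ 2})
    (E : Set ℂ) (hE : E = ⋂ k, ⋂ (_ : 1 ≤ k), S k)
    (hub : ∀ C : ℝ, ∃ k, 1 ≤ k ∧ C < ‖c k‖) :
    ∀ m : ℕ, PointwiseThin (Q 0 m '' E) ∧ HNUP (Q 0 m '' E) := by
  intro m
  have hM : StrictMono M := strictMono_nat_of_lt_succ fun k => by rw [hMs]; omega
  have hP := P_eq_sq_add_P_zero hP1 hP2
  have hN : ∀ k, 1 ≤ k → ‖c k‖ + 2 ≤ 2 ^ 2 ^ (msq k + 1) := fun k hk => by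
    rw [pow_succ, pow_mul]
    exact add_two_le_sq_of_two_sqrt_le (by linarith [hc k hk]) (hinv k hk)
  have hblock : ∀ l x, Q 0 (M (l + 1)) x = Q 0 (M l) x ^ 2 ^ (msq (l + 1) + 1) + c (l + 1) :=
    fun l x => by
      rw [← Q_comp hQ0 hQs (Nat.zero_le _) (hM.monotone l.le_succ),
        Q_block hQ0 hQs hM hMs hP1 hP2]
  have hpow : ∀ l j, M l ≤ j → j < M (l + 1) → ∀ x, Q 0 j x = Q 0 (M l) x ^ 2 ^ (j - M l) :=
    fun l j h1 h2 x => by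
      rw [← Q_comp hQ0 hQs (Nat.zero_le _) h1, Q_eq_pow_of_mem_block hQ0 hQs hM hP2 h1 h2]
  have hEset : E = {x | ∀ k, 1 ≤ k → ‖Q 0 (M k) x‖ ≤ 2} := by ext; simp [hE, hS]
  have hbounds : ∀ x ∈ E, ∀ l, ‖Q 0 (M l) x‖ ∈ Icc 1 2 := fun x hx =>
    norm_mem_Icc_of_forall_norm_le_two (G := fun l => Q 0 (M l)) hblock hc hN (by rwa [hEset] at hx)
  have hthin : PointwiseThin (Q 0 m '' E) := by
    refine pointwiseThin_image (f := fun j => Q 0 j) (N := fun k => 2 ^ (msq k + 1)) m hM.id_le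
      (fun _ => Nat.one_le_two_pow) (fun j => Q_succ_sub hQs hP j.zero_le) hblock
      (fun x hx l => (hbounds x hx l).2)
      (fun x hx => one_le_norm_orbit hM0 hM hpow fun l => (hbounds x hx l).1) ?_
      (exists_lt_of_forall_exists_lt fun C => (hub C).imp fun _ => And.right)
    rw [hEset]
    exact neg_mem_image hM0 hM (hQ0 0) hpow hblock
      (fun t n x y htn => Q_eq_of_Q_eq_neg hQ0 hQs hP t.zero_le htn) hc hN m
  exact ⟨hthin, hthin.hnup⟩

/-- Under the stronger condition 2^(2^(m_k)) ≥ 2√|c_k| and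
limsup |c_k| = +∞, every iterated Julia set J_m = Q_m(E) is pointwise thin
(and hence hereditarily non uniformly perfect). -/
theorem stmt_16
    (c : ℕ → ℂ) (msq : ℕ → ℕ)
    (hc : ∀ k, 1 ≤ k → 4 < ‖c k‖)
    (hmsq : ∀ k, 1 ≤ k → 1 ≤ msq k)
    (hinv : ∀ k, 1 ≤ k → 2 * Real.sqrt (‖c k‖) ≤ (2 : ℝ) ^ 2 ^ msq k)
    (M : ℕ → ℕ) (hM0 : M 0 = 0)
    (hMs : ∀ k, M (k + 1) = M k + (msq (k + 1) + 1))
    (P : ℕ → ℂ → ℂ)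
    (hP1 : ∀ k, 1 ≤ k → ∀ z, P (M k) z = z ^ 2 + c k)
    (hP2 : ∀ n, (∀ k, 1 ≤ k → M k ≠ n) → ∀ z, P n z = z ^ 2)
    (Q : ℕ → ℕ → ℂ → ℂ)
    (hQ0 : ∀ n z, Q n n z = z)
    (hQs : ∀ a n z, a ≤ n → Q a (n + 1) z = P (n + 1) (Q a n z))
    (S : ℕ → Set ℂ)
    (hS : ∀ k, S k = {z : ℂ | ‖Q 0 (M k) z‖ ≤ 2})
    (E : Set ℂ) (hE : E = ⋂ k, ⋂ (_ : 1 ≤ k), S k)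
    (hub : ∀ C : ℝ, ∃ k, 1 ≤ k ∧ C < ‖c k‖) :
    ∀ m : ℕ, PointwiseThin (Q 0 m '' E) ∧ HNUP (Q 0 m '' E) :=
  stmt_16_general c msq hc hinv M hM0 hMs P hP1 hP2 Q hQ0 hQs S hS E hE hub
end
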